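/- arXiv:1106.2409 — 5 statements merged into one kernel-verified Lean document; each statement's English description precedes it below -/
import Mathlib

section
/- For all real x with -1 ≤ x ≤ 1, the binary entropy satisfies 1 - h((1+x)/2) ≤ x², where h(t) = -t·log₂(t) - (1-t)·log₂(1-t) (with h(0)=h(1)=0). -/
/-! Write `p = (1 + x) / 2`. In nats, `log 2 - binEntropy p` has the power series
`∑ₖ x ^ (2k+2) / (2 (k+1) (2k+1))`, which has nonnegative coefficients and only even powers.
Hence it is at most `x²` times the sum of its coefficients, and that sum is at most `log 2`
because `binEntropy ≥ 0` on `[0, 1]` (let `x → 1⁻` in each partial sum). Dividing by `log 2`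
converts to bits. -/

open Real Filter Topology

/-- Binary Shannon entropy in bits; `Real.logb 2 0 = 0` so `binEnt 0 = binEnt 1 = 0`. -/
noncomputable def binEnt (t : ℝ) : ℝ := -(t * Real.logb 2 t) - (1 - t) * Real.logb 2 (1 - t)

noncomputable def entropyGapCoeff (k : ℕ) : ℝ := 1 / (2 * (k + 1) * (2 * k + 1))

lemma entropyGapCoeff_nonneg (k : ℕ) : 0 ≤ entropyGapCoeff k := by
  unfold entropyGapCoeff; positivity

lemma mul_log_div_two (a : ℝ) : a * log (a / 2) = a * log a - a * log 2 := by
  rcases eq_or_ne a 0 with rfl | ha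
  · simp
  · rw [log_div ha two_ne_zero]; ring

lemma log_two_sub_binEntropy_one_add_div_two (x : ℝ) :
    log 2 - binEntropy ((1 + x) / 2) =
      ((1 + x) * log (1 + x) + (1 - x) * log (1 - x)) / 2 := by
  have hsub : 1 - (1 + x) / 2 = (1 - x) / 2 := by ring
  have h₁ := mul_log_div_two (1 + x)
  have h₂ := mul_log_div_two (1 - x)
  rw [binEntropy_eq_negMulLog_add_negMulLog_one_sub, hsub, negMulLog, negMulLog]
  linear_combination h₁ / 2 + h₂ / 2

lemma hasSum_log_two_sub_binEntropy {x : ℝ} (hx : |x| < 1) :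
    HasSum (fun k : ℕ => x ^ (2 * k + 2) * entropyGapCoeff k)
      (log 2 - binEntropy ((1 + x) / 2)) := by
  have hx₁ : 1 + x ≠ 0 := by linarith [(abs_lt.mp hx).1]
  have hx₂ : 1 - x ≠ 0 := by linarith [(abs_lt.mp hx).2]
  have hsq : |x ^ 2| < 1 := by
    rw [abs_pow, sq_lt_one_iff₀ (abs_nonneg x)]; exact hx
  have hodd := (hasSum_log_sub_log_of_abs_lt_one hx).mul_left (x / 2)
  have hlog := (hasSum_pow_div_log_of_abs_lt_one hsq).mul_left (-1 / 2)
  have hterm : (fun k : ℕ => x ^ (2 * k + 2) * entropyGapCoeff k) = fun k : ℕ =>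
      x / 2 * (2 * (1 / (2 * k + 1)) * x ^ (2 * k + 1)) +
        -1 / 2 * ((x ^ 2) ^ (k + 1) / (k + 1)) := by
    funext k
    unfold entropyGapCoeff
    field_simp
    ring
  have hsum : log 2 - binEntropy ((1 + x) / 2) =
      x / 2 * (log (1 + x) - log (1 - x)) + -1 / 2 * -log (1 - x ^ 2) := by
    rw [log_two_sub_binEntropy_one_add_div_two, show 1 - x ^ 2 = (1 + x) * (1 - x) by ring,
      log_mul hx₁ hx₂]
    ring
  rw [hterm, hsum]
  exact hodd.add hlog

lemma sum_entropyGapCoeff_le_log_two (s : Finset ℕ) :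
    ∑ k ∈ s, entropyGapCoeff k ≤ log 2 := by
  have hlim : Tendsto (fun y : ℝ => ∑ k ∈ s, y ^ (2 * k + 2) * entropyGapCoeff k)
      (𝓝[<] 1) (𝓝 (∑ k ∈ s, entropyGapCoeff k)) := by
    have : Continuous fun y : ℝ => ∑ k ∈ s, y ^ (2 * k + 2) * entropyGapCoeff k := by fun_prop
    simpa using (this.tendsto 1).mono_left nhdsWithin_le_nhds
  refine le_of_tendsto hlim ?_
  filter_upwards [Ioo_mem_nhdsLT (show (0 : ℝ) < 1 by norm_num)] with y ⟨hy₀, hy₁⟩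
  have hy : |y| < 1 := abs_lt.mpr ⟨by linarith, hy₁⟩
  calc ∑ k ∈ s, y ^ (2 * k + 2) * entropyGapCoeff k
      ≤ log 2 - binEntropy ((1 + y) / 2) :=
        sum_le_hasSum s (fun k _ => by have := entropyGapCoeff_nonneg k; positivity)
          (hasSum_log_two_sub_binEntropy hy)
    _ ≤ log 2 := by
        linarith [binEntropy_nonneg (p := (1 + y) / 2) (by linarith) (by linarith)]

lemma summable_entropyGapCoeff : Summable entropyGapCoeff :=
  summable_of_sum_le entropyGapCoeff_nonneg sum_entropyGapCoeff_le_log_two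

lemma log_two_sub_binEntropy_le {x : ℝ} (hx : |x| ≤ 1) :
    log 2 - binEntropy ((1 + x) / 2) ≤ x ^ 2 * log 2 := by
  rcases hx.lt_or_eq with hx | hx
  · have hx2 : x ^ 2 ≤ 1 := (sq_le_one_iff_abs_le_one x).mpr hx.le
    have hterm (k : ℕ) : x ^ (2 * k + 2) * entropyGapCoeff k ≤ x ^ 2 * entropyGapCoeff k := by
      rw [show x ^ (2 * k + 2) = (x ^ 2) ^ (k + 1) by ring]
      exact mul_le_mul_of_nonneg_right (pow_le_of_le_one (sq_nonneg x) hx2 k.succ_ne_zero)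
        (entropyGapCoeff_nonneg k)
    have hseries := hasSum_log_two_sub_binEntropy hx
    calc log 2 - binEntropy ((1 + x) / 2)
        = ∑' k, x ^ (2 * k + 2) * entropyGapCoeff k := hseries.tsum_eq.symm
      _ ≤ ∑' k, x ^ 2 * entropyGapCoeff k :=
          hseries.summable.tsum_le_tsum hterm (summable_entropyGapCoeff.mul_left _)
      _ = x ^ 2 * ∑' k, entropyGapCoeff k := tsum_mul_left
      _ ≤ x ^ 2 * log 2 := by
          gcongr
          exact summable_entropyGapCoeff.tsum_le_of_sum_le sum_entropyGapCoeff_le_log_two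
  · rcases abs_eq (zero_le_one' ℝ) |>.mp hx with rfl | rfl <;> norm_num

lemma binEnt_eq_binEntropy_div_log_two (t : ℝ) : binEnt t = binEntropy t / log 2 := by
  simp only [binEnt, binEntropy_eq_negMulLog_add_negMulLog_one_sub, negMulLog, logb]
  ring

theorem stmt_0 (x : ℝ) (h1 : -1 ≤ x) (h2 : x ≤ 1) :
    1 - binEnt ((1 + x) / 2) ≤ x ^ 2 := by
  have hlog2 : 0 < log 2 := log_pos one_lt_two
  rw [binEnt_eq_binEntropy_div_log_two, one_sub_div hlog2.ne', div_le_iff₀ hlog2]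
  exact log_two_sub_binEntropy_le (abs_le.mpr ⟨h1, h2⟩)
end

section
/- For all real x with -1 < x < 1, the following series identity holds: 1 - h((1+x)/2) = ∑_{n=1}^∞ x^(2n) / (2n(2n-1)·ln 2), where h is the binary entropy in bits. -/
open Real

lemma mul_log_div_eq {c : ℝ} (hc : c ≠ 0) (t : ℝ) : t * log (t / c) = t * log t - t * log c := by
  rcases eq_or_ne t 0 with rfl | ht
  · simp
  · rw [log_div ht hc, mul_sub]

lemma one_sub_binEnt_one_add_div_two (x : ℝ) :
    1 - binEnt ((1 + x) / 2) =
      ((1 + x) * log (1 + x) + (1 - x) * log (1 - x)) / (2 * log 2) := by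
  rw [binEnt, logb, logb, show 1 - (1 + x) / 2 = (1 - x) / 2 by ring]
  field_simp
  linear_combination mul_log_div_eq two_ne_zero (1 + x) + mul_log_div_eq two_ne_zero (1 - x)

lemma hasSum_mul_log_add_mul_log {x : ℝ} (hx : |x| < 1) :
    HasSum (fun n : ℕ => x ^ (2 * (n + 1)) / ((n + 1) * (2 * n + 1)))
      ((1 + x) * log (1 + x) + (1 - x) * log (1 - x)) := by
  have hx2 : |x ^ 2| < 1 := by rw [abs_pow]; exact pow_lt_one₀ (abs_nonneg x) hx two_ne_zero
  have hlog_sq := (hasSum_pow_div_log_of_abs_lt_one hx2).neg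
  have hodd := (hasSum_log_sub_log_of_abs_lt_one hx).mul_left x
  have hsplit : (1 + x) * log (1 + x) + (1 - x) * log (1 - x) =
      -(-log (1 - x ^ 2)) + x * (log (1 + x) - log (1 - x)) := by
    rw [show 1 - x ^ 2 = (1 + x) * (1 - x) by ring,
      log_mul (by linarith [neg_abs_le x]) (by linarith [le_abs_self x])]
    ring
  have hterm : (fun n : ℕ => x ^ (2 * (n + 1)) / ((n + 1) * (2 * n + 1))) =
      fun n : ℕ =>
        -((x ^ 2) ^ (n + 1) / (n + 1)) + x * (2 * (1 / (2 * n + 1)) * x ^ (2 * n + 1)) := by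
    funext n
    field_simp
    ring
  rw [hterm, hsplit]
  exact hlog_sq.add hodd

theorem stmt_1 (x : ℝ) (h1 : -1 < x) (h2 : x < 1) :
    1 - binEnt ((1 + x) / 2)
      = ∑' n : ℕ, x ^ (2 * (n + 1)) /
          ((2 * ((n : ℝ) + 1)) * (2 * ((n : ℝ) + 1) - 1) * Real.log 2) := by
  rw [one_sub_binEnt_one_add_div_two,
    ((hasSum_mul_log_add_mul_log (abs_lt.2 ⟨h1, h2⟩)).div_const (2 * log 2)).tsum_eq.symm]
  congr 1 with n
  rw [div_div]
  ring
end

section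
/- Let F be a 2ⁿ×2ⁿ ±1 matrix with orthogonal rows, p a probability distribution, h_j vectors with ‖h_j‖ ≤ 1, x_i = ∑_j f_{i,j} p_j h_j, and for each i let w_i be a unit vector. Then ∑_i ⟨w_i, x_i⟩² ≤ 2ⁿ ∑_j p_j² ‖h_j‖². -/
/-!
By Cauchy–Schwarz, `⟪w i, x i⟫ ^ 2 ≤ ‖x i‖ ^ 2` for unit vectors `w i`. A square matrix with
`F Fᵀ = 2ⁿ • 1` also satisfies `Fᵀ F = 2ⁿ • 1`, so its columns are orthogonal too, and the
resulting Parseval-type identity gives `∑ i, ‖∑ j, F i j • v j‖ ^ 2 = 2ⁿ ∑ j, ‖v j‖ ^ 2`,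
applied to `v j = p j • h j`.
-/

open RealInnerProductSpace Matrix

theorem Matrix.mul_eq_smul_one_comm {ι K : Type*} [Fintype ι] [DecidableEq ι] [Field K]
    {A B : Matrix ι ι K} {c : K} (hc : c ≠ 0) (hAB : A * B = c • 1) : B * A = c • 1 := by
  have hinv : A * (c⁻¹ • B) = 1 := by
    rw [Matrix.mul_smul, hAB, smul_smul, inv_mul_cancel₀ hc, one_smul]
  have hinv' : (c⁻¹ • B) * A = 1 := mul_eq_one_comm.mp hinv
  rw [Matrix.smul_mul] at hinv'
  rw [← hinv', smul_smul, mul_inv_cancel₀ hc, one_smul]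

theorem sum_norm_sq_sum_smul_of_transpose_mul_eq_smul_one {ι κ V : Type*} [Fintype ι] [Fintype κ]
    [DecidableEq κ] [NormedAddCommGroup V] [InnerProductSpace ℝ V]
    {A : Matrix ι κ ℝ} {c : ℝ} (hA : Aᵀ * A = c • 1) (v : κ → V) :
    ∑ i, ‖∑ j, A i j • v j‖ ^ 2 = c * ∑ j, ‖v j‖ ^ 2 := by
  have hcol : ∀ j k, ∑ i, A i j * A i k = if j = k then c else 0 := fun j k => by
    simpa [Matrix.mul_apply, Matrix.one_apply] using congrFun (congrFun hA j) k
  calc ∑ i, ‖∑ j, A i j • v j‖ ^ 2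
      = ∑ i, ∑ j, ∑ k, A i j * A i k * ⟪v j, v k⟫ := by
        refine Finset.sum_congr rfl fun i _ => ?_
        simp only [← real_inner_self_eq_norm_sq, sum_inner, inner_sum, real_inner_smul_left,
          real_inner_smul_right]
        rw [Finset.sum_comm]
        simp only [mul_left_comm, mul_assoc]
    _ = ∑ j, ∑ k, (∑ i, A i j * A i k) * ⟪v j, v k⟫ := by
        simp only [Finset.sum_mul]
        rw [Finset.sum_comm]
        exact Finset.sum_congr rfl fun j _ => Finset.sum_comm
    _ = c * ∑ j, ‖v j‖ ^ 2 := by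
        simp [hcol, Finset.mul_sum]

theorem real_inner_sq_le_norm_sq_of_norm_le_one {V : Type*} [NormedAddCommGroup V]
    [InnerProductSpace ℝ V] {u : V} (hu : ‖u‖ ≤ 1) (x : V) : ⟪u, x⟫ ^ 2 ≤ ‖x‖ ^ 2 := by
  rw [← sq_abs]
  gcongr
  calc |⟪u, x⟫| ≤ ‖u‖ * ‖x‖ := abs_real_inner_le_norm u x
    _ ≤ ‖x‖ := mul_le_of_le_one_left (norm_nonneg x) hu

theorem stmt_5_general {V : Type*} [NormedAddCommGroup V] [InnerProductSpace ℝ V]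
    (n : ℕ) (F : Fin (2 ^ n) → Fin (2 ^ n) → ℝ)
    (hrows : ∀ i i', ∑ j, F i j * F i' j = if i = i' then ((2 : ℝ) ^ n) else 0)
    (p : Fin (2 ^ n) → ℝ)
    (h : Fin (2 ^ n) → V)
    (w : Fin (2 ^ n) → V) (hw : ∀ i, ‖w i‖ = 1) :
    ∑ i, ⟪w i, ∑ j, (F i j * p j) • h j⟫ ^ 2
      ≤ (2 : ℝ) ^ n * ∑ j, (p j) ^ 2 * ‖h j‖ ^ 2 := by
  have hcols : (Matrix.of F)ᵀ * Matrix.of F = (2 : ℝ) ^ n • 1 := by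
    refine Matrix.mul_eq_smul_one_comm (by positivity) ?_
    ext i i'
    simpa [Matrix.mul_apply, Matrix.one_apply] using hrows i i'
  calc ∑ i, ⟪w i, ∑ j, (F i j * p j) • h j⟫ ^ 2
      ≤ ∑ i, ‖∑ j, Matrix.of F i j • (p j • h j)‖ ^ 2 := by
        refine Finset.sum_le_sum fun i _ => ?_
        simpa only [Matrix.of_apply, smul_smul] using
          real_inner_sq_le_norm_sq_of_norm_le_one (hw i).le _
    _ = (2 : ℝ) ^ n * ∑ j, (p j) ^ 2 * ‖h j‖ ^ 2 := by
        simp only [sum_norm_sq_sum_smul_of_transpose_mul_eq_smul_one hcols, norm_smul,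
          mul_pow, Real.norm_eq_abs, sq_abs]

theorem stmt_5 {V : Type*} [NormedAddCommGroup V] [InnerProductSpace ℝ V]
    (n : ℕ) (F : Fin (2 ^ n) → Fin (2 ^ n) → ℝ)
    (hpm : ∀ i j, F i j = 1 ∨ F i j = -1)
    (hrows : ∀ i i', ∑ j, F i j * F i' j = if i = i' then ((2 : ℝ) ^ n) else 0)
    (p : Fin (2 ^ n) → ℝ) (hp0 : ∀ j, 0 ≤ p j) (hp1 : ∑ j, p j = 1)
    (h : Fin (2 ^ n) → V) (hh : ∀ j, ‖h j‖ ≤ 1)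
    (w : Fin (2 ^ n) → V) (hw : ∀ i, ‖w i‖ = 1) :
    ∑ i, ⟪w i, ∑ j, (F i j * p j) • h j⟫ ^ 2
      ≤ (2 : ℝ) ^ n * ∑ j, (p j) ^ 2 * ‖h j‖ ^ 2 :=
  stmt_5_general n F hrows p h w hw
end

section
/- With uniform distribution p_j = 2⁻ⁿ and unit-length vectors h_j, and x_avg = 2⁻ⁿ ∑_j h_j, we have ∑_{i=2}^{2ⁿ} ‖x_i‖² = 1 - ‖x_avg‖², where x_i = 2⁻ⁿ ∑_j f_{i,j} h_j for a ±1 matrix F with orthogonal rows whose first row is all ones. -/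
/-! Put `c = 2⁻ⁿ` and `N = 2ⁿ`. Row orthogonality says `F Fᵀ = N • 1`; for a square matrix this
forces `Fᵀ F = N • 1`, i.e. the columns are orthogonal as well. Expanding the squared norms then gives
`∑ᵢ ‖∑ⱼ F i j • h j‖² = N ∑ⱼ ‖h j‖² = N²`, so the vectors `x i = c • ∑ⱼ F i j • h j` satisfy
`∑ᵢ ‖x i‖² = 1`, and the first one, coming from the row of ones, is `x_avg`. -/

open Finset Matrix

theorem Matrix.transpose_mul_self_eq_smul_one {ι K : Type*} [Fintype ι] [DecidableEq ι] [Field K]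
    {A : Matrix ι ι K} {c : K} (hc : c ≠ 0) (hA : A * Aᵀ = c • 1) : Aᵀ * A = c • 1 := by
  have hinv : A * (c⁻¹ • Aᵀ) = 1 := by rw [mul_smul_comm, hA, smul_smul, inv_mul_cancel₀ hc, one_smul]
  have hinv' := mul_eq_one_comm.mp hinv
  rw [smul_mul_assoc] at hinv'
  rw [← hinv', smul_smul, mul_inv_cancel₀ hc, one_smul]

theorem sum_norm_sum_smul_sq_of_transpose_mul_self {m ι V : Type*} [Fintype m] [Fintype ι]
    [DecidableEq ι] [NormedAddCommGroup V] [InnerProductSpace ℝ V] {A : Matrix m ι ℝ} {c : ℝ}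
    (hA : Aᵀ * A = c • 1) (h : ι → V) :
    ∑ i, ‖∑ j, A i j • h j‖ ^ 2 = c * ∑ j, ‖h j‖ ^ 2 := by
  have hcol (j k : ι) : ∑ i, A i j * A i k = if j = k then c else 0 := by
    simpa [mul_apply, one_apply] using congrFun (congrFun hA j) k
  calc ∑ i, ‖∑ j, A i j • h j‖ ^ 2
      = ∑ j, ∑ k, (∑ i, A i j * A i k) * inner ℝ (h j) (h k) := by
        simp_rw [← real_inner_self_eq_norm_sq, sum_inner, inner_sum, real_inner_smul_left,
          real_inner_smul_right, sum_mul, mul_assoc]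
        rw [sum_comm]
        exact sum_congr rfl fun j _ => sum_comm
    _ = c * ∑ j, ‖h j‖ ^ 2 := by
        simp [hcol, ite_mul, mul_sum]

theorem stmt_7 {V : Type*} [NormedAddCommGroup V] [InnerProductSpace ℝ V]
    (n : ℕ) (F : Fin (2 ^ n) → Fin (2 ^ n) → ℝ)
    (hrows : ∀ i i', ∑ j, F i j * F i' j = if i = i' then ((2 : ℝ) ^ n) else 0)
    (hfirst : ∀ j, F ⟨0, Nat.pow_pos (by norm_num)⟩ j = 1)
    (h : Fin (2 ^ n) → V) (hh : ∀ j, ‖h j‖ = 1) :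
    ∑ i ∈ Finset.univ \ {⟨0, Nat.pow_pos (by norm_num)⟩},
        ‖((2 : ℝ)⁻¹ ^ n) • ∑ j, F i j • h j‖ ^ 2
      = 1 - ‖((2 : ℝ)⁻¹ ^ n) • ∑ j, h j‖ ^ 2 := by
  have hF : of F * (of F)ᵀ = (2 : ℝ) ^ n • 1 := by
    ext i i'
    simp [mul_apply, one_apply, hrows]
  have hcols := Matrix.transpose_mul_self_eq_smul_one (by positivity) hF
  have hparseval := sum_norm_sum_smul_sq_of_transpose_mul_self hcols h
  simp only [of_apply, hh, one_pow, sum_const, card_univ, Fintype.card_fin, nsmul_one] at hparseval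
  have htotal : ∑ i, ‖((2 : ℝ)⁻¹ ^ n) • ∑ j, F i j • h j‖ ^ 2 = 1 := by
    simp_rw [norm_smul, mul_pow, ← mul_sum, hparseval, norm_pow, norm_inv, Real.norm_two]
    push_cast
    rw [← pow_two, ← mul_pow, ← mul_pow]
    norm_num
  rw [sum_sdiff_eq_sub (subset_univ _), htotal, sum_singleton]
  simp only [hfirst, one_smul]
end

section
/- For a probability distribution p on Fin 2ⁿ, a ±1 matrix F with orthogonal rows, and vectors h_j with ‖h_j‖ ≤ 1, if the three queries correspond to rows giving biases E₁, E₂, E₃ (with n such that 2ⁿ ≥ 4, uniform p and unit h_j restricted to a 3-row sub-collection with the all-ones row excluded), then E₁² + E₂² + E₃² ≤ 1. Concretely: for unit vectors h_1,...,h_4 in a real inner product space and the three vectors x_i = (1/4)∑_j f_{i,j} h_j for i=2,3,4 where F is the 4×4 Hadamard matrix, ∑_{i=2}^4 ‖x_i‖² ≤ 1. -/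
/-- The 4×4 Hadamard matrix. -/
def H4 : Fin 4 → Fin 4 → ℝ :=
  ![![1, 1, 1, 1], ![1, -1, 1, -1], ![1, 1, -1, -1], ![1, -1, -1, 1]]

/-! The columns of `H4` are orthogonal, each of squared length 4, so by Parseval the four biases
have total squared norm `(1/16) · 4 ∑ ‖h j‖² ≤ 1`; dropping the all-ones row only decreases
the sum. -/

open Finset

theorem sum_norm_sq_sum_smul_of_orthogonal_columns {V ι κ : Type*} [NormedAddCommGroup V]
    [InnerProductSpace ℝ V] [Fintype ι] [Fintype κ] [DecidableEq κ] (A : ι → κ → ℝ) (c : ℝ)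
    (hA : ∀ j k, ∑ i, A i j * A i k = if j = k then c else 0) (v : κ → V) :
    ∑ i, ‖∑ j, A i j • v j‖ ^ 2 = c * ∑ j, ‖v j‖ ^ 2 := by
  calc ∑ i, ‖∑ j, A i j • v j‖ ^ 2
      = ∑ j, ∑ k, (∑ i, A i j * A i k) * inner ℝ (v j) (v k) := by
        simp_rw [← real_inner_self_eq_norm_sq, sum_inner, inner_sum, real_inner_smul_left,
          real_inner_smul_right, sum_mul]
        rw [sum_comm]
        refine sum_congr rfl fun j _ => ?_
        rw [sum_comm]
        refine sum_congr rfl fun k _ => sum_congr rfl fun i _ => ?_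
        ring
    _ = c * ∑ j, ‖v j‖ ^ 2 := by
        simp_rw [hA, ite_mul, zero_mul, sum_ite_eq, mem_univ, if_true, real_inner_self_eq_norm_sq,
          mul_sum]

theorem H4_orthogonal_columns (j k : Fin 4) :
    ∑ i, H4 i j * H4 i k = if j = k then 4 else 0 := by
  fin_cases j <;> fin_cases k <;> simp [H4, Fin.sum_univ_four] <;> norm_num

theorem stmt_17 {V : Type*} [NormedAddCommGroup V] [InnerProductSpace ℝ V]
    (h : Fin 4 → V) (hh : ∀ j, ‖h j‖ ≤ 1) :
    ∑ i ∈ ({1, 2, 3} : Finset (Fin 4)), ‖(1 / 4 : ℝ) • ∑ j, H4 i j • h j‖ ^ 2 ≤ 1 := by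
  calc ∑ i ∈ ({1, 2, 3} : Finset (Fin 4)), ‖(1 / 4 : ℝ) • ∑ j, H4 i j • h j‖ ^ 2
      ≤ ∑ i, ‖(1 / 4 : ℝ) • ∑ j, H4 i j • h j‖ ^ 2 :=
        sum_le_sum_of_subset_of_nonneg (subset_univ _) fun _ _ _ => by positivity
    _ = (1 / 4) ^ 2 * (4 * ∑ j, ‖h j‖ ^ 2) := by
        simp_rw [norm_smul, mul_pow, ← mul_sum,
          sum_norm_sq_sum_smul_of_orthogonal_columns H4 4 H4_orthogonal_columns]
        norm_num
    _ ≤ (1 / 4) ^ 2 * (4 * ∑ _j : Fin 4, 1) := by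
        gcongr with j
        exact pow_le_one₀ (norm_nonneg _) (hh j)
    _ = 1 := by norm_num
end
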